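/- arXiv:2401.12903 — 4 statements merged into one kernel-verified Lean document; each statement's English description precedes it below -/
import Mathlib

section
/- For the pair-distinguishability task with classical encoding p_e(m|x) (probability distributions over messages m for each input x in [N]), the success metric S_C = 1 − (1/(N(N−1)))·∑_m ∑_{x<x'} min(p_e(m|x), p_e(m|x')) and the distinguishability D_C = (1/N)·∑_m max_x p_e(m|x) satisfy (N−1)(S_C − 1) + 1 ≤ D_C. -/
/-!
For a single message `m`, pair every input with an input `x₀` maximising `p m`: the minimum over
the pair `{x, x₀}` is `p m x`, so `∑ₓ p m x ≤ maxₓ p m x + ∑_{x<x'} min (p m x) (p m x')`.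
Summing over `m` gives `N ≤ N D + N (N - 1) (1 - S)`, which is the claim.
-/

open Finset

section PairwiseMin

variable {ι R : Type*} [LinearOrder ι] [Fintype ι]
  [AddCommMonoid R] [LinearOrder R] [IsOrderedAddMonoid R]

/-- Pairing every `i ≠ i₀` with the maximiser `i₀` gives distinct ordered pairs whose minimum
is `f i`. -/
theorem sum_le_apply_add_sum_min_of_isMax {f : ι → R} (hf : ∀ i, 0 ≤ f i) {i₀ : ι}
    (hi₀ : ∀ i, f i ≤ f i₀) :
    ∑ i, f i ≤ f i₀ + ∑ q ∈ univ.filter (fun q : ι × ι => q.1 < q.2), min (f q.1) (f q.2) := by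
  set pairWith : ι → ι × ι := fun i => (min i i₀, max i i₀)
  have hinj : Set.InjOn pairWith (univ.erase i₀ : Finset ι) := by
    intro a _ b _ hab
    simp only [pairWith, Prod.mk.injEq] at hab
    rcases le_total a i₀ with ha | ha <;> rcases le_total b i₀ with hb | hb <;>
      simp_all
  have hsub : (univ.erase i₀).image pairWith ⊆ univ.filter (fun q : ι × ι => q.1 < q.2) := by
    simp only [subset_iff, mem_image, mem_erase, mem_filter, mem_univ, and_true, true_and]
    rintro _ ⟨i, hi, rfl⟩
    exact min_lt_max.2 hi
  have hpair : ∀ i, min (f (pairWith i).1) (f (pairWith i).2) = f i := by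
    intro i
    rcases le_total i i₀ with h | h
    · simp [pairWith, min_eq_left h, max_eq_right h, min_eq_left (hi₀ i)]
    · simp [pairWith, min_eq_right h, max_eq_left h, min_eq_right (hi₀ i)]
  calc ∑ i, f i = f i₀ + ∑ i ∈ univ.erase i₀, f i := (add_sum_erase _ f (mem_univ i₀)).symm
    _ = f i₀ + ∑ q ∈ (univ.erase i₀).image pairWith, min (f q.1) (f q.2) := by
      rw [sum_image hinj]
      simp only [hpair]
    _ ≤ _ := add_le_add le_rfl
      (sum_le_sum_of_subset_of_nonneg hsub fun q _ _ => le_min (hf q.1) (hf q.2))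

theorem sum_le_sup'_add_sum_min [Nonempty ι] {f : ι → R} (hf : ∀ i, 0 ≤ f i) :
    ∑ i, f i ≤ univ.sup' univ_nonempty f +
      ∑ q ∈ univ.filter (fun q : ι × ι => q.1 < q.2), min (f q.1) (f q.2) := by
  obtain ⟨i₀, -, hi₀⟩ := exists_mem_eq_sup' univ_nonempty f
  rw [hi₀]
  exact sum_le_apply_add_sum_min_of_isMax hf fun i => hi₀ ▸ le_sup' f (mem_univ i)

end PairwiseMin

theorem card_le_sum_sup'_add_sum_min {M ι : Type*} [Fintype M] [LinearOrder ι] [Fintype ι]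
    [Nonempty ι] {p : M → ι → ℝ} (hp : ∀ m x, 0 ≤ p m x) (hsum : ∀ x, ∑ m, p m x = 1) :
    (Fintype.card ι : ℝ) ≤ ∑ m, univ.sup' univ_nonempty (p m) +
      ∑ m, ∑ q ∈ univ.filter (fun q : ι × ι => q.1 < q.2), min (p m q.1) (p m q.2) := by
  calc (Fintype.card ι : ℝ) = ∑ m, ∑ x, p m x := by simp [sum_comm (γ := M), hsum]
    _ ≤ _ := by
      rw [← sum_add_distrib]
      exact sum_le_sum fun m _ => sum_le_sup'_add_sum_min (hp m)

theorem pair_distinguishability_classical_bound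
    (M : Type*) [Fintype M] (N : ℕ) (hN : 2 ≤ N)
    (p : M → Fin N → ℝ) (hp : ∀ m x, 0 ≤ p m x)
    (hsum : ∀ x, ∑ m, p m x = 1)
    (S D : ℝ)
    (hS : S = 1 - (1 / (N * (N - 1))) *
      ∑ m, ∑ q ∈ Finset.univ.filter (fun q : Fin N × Fin N => q.1 < q.2),
        min (p m q.1) (p m q.2))
    (hD : haveI : Nonempty (Fin N) := Fin.pos_iff_nonempty.mp (by omega)
      D = (1 / N) * ∑ m, Finset.univ.sup' Finset.univ_nonempty (p m)) :
    (N - 1) * (S - 1) + 1 ≤ D := by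
  have : Nonempty (Fin N) := Fin.pos_iff_nonempty.mp (by omega)
  have hkey := card_le_sum_sup'_add_sum_min hp hsum
  rw [Fintype.card_fin] at hkey
  have hN1 : (0 : ℝ) < N - 1 := by
    rw [sub_pos]
    exact_mod_cast hN
  rw [hS, hD]
  field_simp
  linarith
end

section
/- Key combinatorial lemma for the RAC bound: let f be a nonnegative function on strings x : Fin n → Fin d, and for each coordinate y let d*_y ∈ Fin d be arbitrary. Then ∑_{y} ∑_{x : x(y) = d*_y} f(x) ≤ f(x*) + (n−1)·∑_x f(x), where x* is the string with x*(y) = d*_y for all y. -/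
/-! Double counting: the left side weights each string `x` by the number of coordinates on which
it agrees with `x*`. That number is `n` for `x*` itself and at most `n - 1` for every other string,
so with `f ≥ 0` the weighted sum is at most `f x* + (n - 1) ∑ f`. -/

open Finset

section

variable {ι X R : Type*} [Fintype ι] [Fintype X]

lemma sum_sum_filter_eq_sum_card_mul [CommSemiring R] (p : ι → X → Prop)
    [∀ y x, Decidable (p y x)] (f : X → R) :
    ∑ y, ∑ x ∈ univ.filter (p y), f x = ∑ x, (#{y | p y x} : R) * f x := by
  simp only [sum_filter]
  rw [sum_comm]
  refine sum_congr rfl fun x _ => ?_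
  rw [← sum_filter, sum_const, nsmul_eq_mul]

end

section

variable {ι : Type*} [Fintype ι] {β : ι → Type*}

lemma card_filter_apply_eq_lt [∀ i, DecidableEq (β i)] {x a : ∀ i, β i}
    (h : x ≠ a) : #{i | x i = a i} < Fintype.card ι := by
  obtain ⟨i, hi⟩ := Function.ne_iff.mp h
  exact card_lt_card (filter_ssubset.mpr ⟨i, mem_univ i, hi⟩)

lemma card_filter_apply_eq_le [∀ i, DecidableEq (β i)] (x a : ∀ i, β i) :
    (#{i | x i = a i} : ℝ) ≤ (Fintype.card ι - 1 : ℝ) + if x = a then 1 else 0 := by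
  split_ifs with h
  · subst h; simp
  · have hlt : (#{i | x i = a i} + 1 : ℝ) ≤ Fintype.card ι := by
      exact_mod_cast card_filter_apply_eq_lt h
    linarith

theorem sum_sum_filter_apply_eq_le [DecidableEq ι] [∀ i, Fintype (β i)] [∀ i, DecidableEq (β i)]
    (f : (∀ i, β i) → ℝ) (hf : ∀ x, 0 ≤ f x) (a : ∀ i, β i) :
    ∑ i, ∑ x ∈ univ.filter (fun x : ∀ i, β i => x i = a i), f x
      ≤ f a + (Fintype.card ι - 1 : ℝ) * ∑ x, f x := by
  calc ∑ i, ∑ x ∈ univ.filter (fun x : ∀ i, β i => x i = a i), f x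
      = ∑ x, (#{i | x i = a i} : ℝ) * f x := sum_sum_filter_eq_sum_card_mul _ f
    _ ≤ ∑ x, ((Fintype.card ι - 1 : ℝ) + if x = a then 1 else 0) * f x :=
        sum_le_sum fun x _ => mul_le_mul_of_nonneg_right (card_filter_apply_eq_le x a) (hf x)
    _ = f a + (Fintype.card ι - 1 : ℝ) * ∑ x, f x := by
        simp [add_mul, sum_add_distrib, mul_sum, add_comm]

end

theorem rac_combinatorial_lemma_general
    (n d : ℕ)
    (f : (Fin n → Fin d) → ℝ) (hf : ∀ x, 0 ≤ f x)
    (dstar : Fin n → Fin d) :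
    ∑ y : Fin n, ∑ x ∈ Finset.univ.filter (fun x : Fin n → Fin d => x y = dstar y), f x
      ≤ f dstar + (n - 1 : ℝ) * ∑ x, f x := by
  simpa using sum_sum_filter_apply_eq_le f hf dstar

theorem rac_combinatorial_lemma
    (n d : ℕ) (hn : 1 ≤ n) (hd : 1 ≤ d)
    (f : (Fin n → Fin d) → ℝ) (hf : ∀ x, 0 ≤ f x)
    (dstar : Fin n → Fin d) :
    ∑ y : Fin n, ∑ x ∈ Finset.univ.filter (fun x : Fin n → Fin d => x y = dstar y), f x
      ≤ f dstar + (n - 1 : ℝ) * ∑ x, f x :=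
  rac_combinatorial_lemma_general n d f hf dstar
end

section
/- Graph equality problem classical bound: for a finite simple graph G on N vertices with independence number α(G), any classical encoding satisfies (1/(N·α(G)))·((∑_x deg(x) + N)·(S_C − 1) + N) ≤ D_C, where S_C = 1 − (1/(∑_x deg(x)+N))·∑_m ∑_y min(p_e(m|y), ∑_{x ~ y} p_e(m|x)) and D_C = (1/N)·∑_m max_x p_e(m|x). -/
open Finset

/-- The independence number of a finite simple graph: the maximum cardinality of a
set of pairwise nonadjacent vertices. -/
def indepNum {V : Type*} [Fintype V] [DecidableEq V] (G : SimpleGraph V) [DecidableRel G.Adj] : ℕ :=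
  Finset.univ.powerset.sup fun s =>
    if ∀ x ∈ s, ∀ y ∈ s, ¬ G.Adj x y then s.card else 0

/-!
For a fixed message `m`, the vertices `y` whose weight `p(m,y)` exceeds the total weight of
their neighbours form an independent set: if two of them were adjacent, each would outweigh the
other. Only these vertices contribute to `∑_y (p(m,y) - min(p(m,y), ∑_{x ~ y} p(m,x)))`, each by at
most `max_x p(m,x)`, so this sum is at most `α(G) · max_x p(m,x)`. Summing over `m` and using
`∑_m p(m,y) = 1` turns the left-hand side into `N - (∑ deg + N)(1 - S)`.
-/

section Graph

variable {V : Type*} [Fintype V] (G : SimpleGraph V) [DecidableRel G.Adj]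

lemma card_le_indepNum [DecidableEq V] (s : Finset V) (hs : ∀ x ∈ s, ∀ y ∈ s, ¬ G.Adj x y) :
    s.card ≤ indepNum G := by
  have := Finset.le_sup (f := fun s => if ∀ x ∈ s, ∀ y ∈ s, ¬ G.Adj x y then s.card else 0)
    (Finset.mem_powerset.mpr (Finset.subset_univ s))
  simpa [indepNum, if_pos hs] using this

lemma one_le_indepNum [DecidableEq V] [Nonempty V] : 1 ≤ indepNum G := by
  simpa using card_le_indepNum G {Classical.arbitrary V} (by simp)

variable {G}

lemma not_adj_of_neighbor_sum_lt {q : V → ℝ} (hq : ∀ x, 0 ≤ q x) {a b : V}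
    (ha : ∑ x ∈ G.neighborFinset a, q x < q a) (hb : ∑ x ∈ G.neighborFinset b, q x < q b) :
    ¬ G.Adj a b := by
  intro hab
  have hba : q b ≤ ∑ x ∈ G.neighborFinset a, q x :=
    single_le_sum (fun i _ => hq i) ((G.mem_neighborFinset a b).mpr hab)
  have hab' : q a ≤ ∑ x ∈ G.neighborFinset b, q x :=
    single_le_sum (fun i _ => hq i) ((G.mem_neighborFinset b a).mpr hab.symm)
  linarith

lemma sum_sub_min_neighbor_sum_le [DecidableEq V] [Nonempty V] {q : V → ℝ}
    (hq : ∀ x, 0 ≤ q x) :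
    ∑ y, (q y - min (q y) (∑ x ∈ G.neighborFinset y, q x)) ≤
      indepNum G * univ.sup' univ_nonempty q := by
  set c := univ.sup' univ_nonempty q
  set Y := univ.filter fun y => ∑ x ∈ G.neighborFinset y, q x < q y
  have hc : ∀ x, q x ≤ c := fun x => le_sup' q (mem_univ x)
  have hY : (Y.card : ℝ) ≤ indepNum G := by
    exact_mod_cast card_le_indepNum G Y fun a ha b hb =>
      not_adj_of_neighbor_sum_lt hq (mem_filter.mp ha).2 (mem_filter.mp hb).2
  have hsupport : ∀ y ∉ Y, q y - min (q y) (∑ x ∈ G.neighborFinset y, q x) = 0 := by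
    intro y hy
    rw [min_eq_left (not_lt.mp fun h => hy (mem_filter.mpr ⟨mem_univ y, h⟩)), sub_self]
  calc ∑ y, (q y - min (q y) (∑ x ∈ G.neighborFinset y, q x))
      = ∑ y ∈ Y, (q y - min (q y) (∑ x ∈ G.neighborFinset y, q x)) :=
        (sum_subset (subset_univ Y) fun y _ hy => hsupport y hy).symm
    _ ≤ ∑ _y ∈ Y, c := by
        refine sum_le_sum fun y _ => ?_
        have : 0 ≤ min (q y) (∑ x ∈ G.neighborFinset y, q x) :=
          le_min (hq y) (sum_nonneg fun x _ => hq x)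
        linarith [hc y]
    _ = Y.card * c := by rw [sum_const, nsmul_eq_mul]
    _ ≤ indepNum G * c :=
        mul_le_mul_of_nonneg_right hY ((hq (Classical.arbitrary V)).trans (hc _))

end Graph

theorem graph_equality_classical_bound
    (N : ℕ) (hN : 0 < N) (G : SimpleGraph (Fin N)) [DecidableRel G.Adj]
    (M : Type*) [Fintype M]
    (p : M → Fin N → ℝ) (hp : ∀ m x, 0 ≤ p m x) (hsum : ∀ x, ∑ m, p m x = 1)
    (S D : ℝ)
    (hS : S = 1 - (1 / ((∑ x, (G.degree x : ℝ)) + N)) *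
      ∑ m, ∑ y, min (p m y) (∑ x ∈ G.neighborFinset y, p m x))
    (hD : haveI : Nonempty (Fin N) := Fin.pos_iff_nonempty.mp hN
      D = (1 / N) * ∑ m, Finset.univ.sup' Finset.univ_nonempty (p m)) :
    (1 / (N * (indepNum G : ℝ))) *
      (((∑ x, (G.degree x : ℝ)) + N) * (S - 1) + N) ≤ D := by
  have : Nonempty (Fin N) := Fin.pos_iff_nonempty.mp hN
  set T := ∑ m, ∑ y, min (p m y) (∑ x ∈ G.neighborFinset y, p m x)
  set B := ∑ m, univ.sup' univ_nonempty (p m)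
  have hNpos : (0 : ℝ) < N := by exact_mod_cast hN
  have hα : (1 : ℝ) ≤ indepNum G := by exact_mod_cast one_le_indepNum G
  have hS1 : ((∑ x, (G.degree x : ℝ)) + N) * (S - 1) = -T := by
    have : (0 : ℝ) ≤ ∑ x, (G.degree x : ℝ) := sum_nonneg fun x _ => Nat.cast_nonneg _
    rw [hS]; field_simp; ring
  have hN_eq : (N : ℝ) = ∑ m, ∑ y, p m y := by
    rw [sum_comm]; simp [hsum]
  have hkey : -T + N ≤ indepNum G * B := by
    rw [hN_eq, mul_sum, ← sum_neg_distrib, ← sum_add_distrib]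
    refine sum_le_sum fun m _ => ?_
    rw [← sum_neg_distrib, ← sum_add_distrib]
    simpa [neg_add_eq_sub] using sum_sub_min_neighbor_sum_le (hp m)
  rw [hD, hS1]
  calc 1 / (N * (indepNum G : ℝ)) * (-T + N)
      ≤ 1 / (N * (indepNum G : ℝ)) * (indepNum G * B) :=
        mul_le_mul_of_nonneg_left hkey (by positivity)
    _ = 1 / N * B := by field_simp
end

section
/- For odd N ≥ 5 the quantum advantage ratio for the N-cycle exceeds 1: (N/(N−1))·(1 − 2·sin²(π/(2N))) > 1. -/
open Real

lemma two_mul_mul_sin_sq_pi_div_lt {x : ℝ} (hx : 0 < x) :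
    2 * x * sin (π / (2 * x)) ^ 2 < π ^ 2 / (2 * x) :=
  calc 2 * x * sin (π / (2 * x)) ^ 2 < 2 * x * (π / (2 * x)) ^ 2 :=
        mul_lt_mul_of_pos_left (sin_sq_lt_sq (by positivity)) (by positivity)
    _ = π ^ 2 / (2 * x) := by field_simp

lemma two_mul_mul_sin_sq_pi_div_lt_one {x : ℝ} (hx : 5 ≤ x) :
    2 * x * sin (π / (2 * x)) ^ 2 < 1 := by
  refine (two_mul_mul_sin_sq_pi_div_lt (by linarith)).trans ?_
  rw [div_lt_one (by linarith)]
  nlinarith [pi_lt_d2, pi_pos]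

lemma one_lt_div_sub_one_mul_one_sub_iff {x t : ℝ} (hx : 1 < x) :
    1 < x / (x - 1) * (1 - t) ↔ x * t < 1 := by
  rw [div_mul_eq_mul_div, one_lt_div (by linarith), mul_one_sub]
  constructor <;> intro h <;> linarith

theorem cycle_quantum_advantage_ratio_gt_one_general
    (N : ℕ) (hN : 5 ≤ N) :
    ((N : ℝ) / ((N : ℝ) - 1)) * (1 - 2 * Real.sin (π / (2 * N)) ^ 2) > 1 := by
  have hN' : (5 : ℝ) ≤ N := by exact_mod_cast hN
  rw [gt_iff_lt, one_lt_div_sub_one_mul_one_sub_iff (by linarith), ← mul_assoc, mul_comm _ (2 : ℝ)]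
  exact two_mul_mul_sin_sq_pi_div_lt_one hN'

theorem cycle_quantum_advantage_ratio_gt_one
    (N : ℕ) (hodd : Odd N) (hN : 5 ≤ N) :
    ((N : ℝ) / ((N : ℝ) - 1)) * (1 - 2 * Real.sin (π / (2 * N)) ^ 2) > 1 :=
  cycle_quantum_advantage_ratio_gt_one_general N hN
end
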